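/- Fix t ∈ {1,…,n} and let σ_t : ℂⁿ ⊕ ℂⁿ → ℂⁿ ⊕ ℂⁿ be the linear map interchanging the t-th coordinates of β and γ and fixing all other coordinates. Then: (i) for every (β,γ) ∈ ℂⁿ ⊕ ℂⁿ, d_{σ_t(β,γ)} ∘ (∂_t − x_t) = −(∂_t − x_t) ∘ d_{(β,γ)} as operators on Λ(ℂⁿ); (ii) (∂_t − x_t)² = −id; (iii) consequently, for any subset V ⊆ ℂⁿ ⊕ ℂⁿ, the map w ↦ (∂_t − x_t)w is a ℂ-linear bijection from {w : d_{(β,γ)}w = 0 for all (β,γ) ∈ V} onto {w : d_{(β',γ')}w = 0 for all (β',γ') ∈ σ_t(V)}. -/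
import Mathlib


open Matrix

noncomputable section

/-- The symmetric bilinear form `B((β,γ),(β',γ')) = Σ_t (β_t γ'_t + β'_t γ_t)` on `ℂⁿ ⊕ ℂⁿ`. -/
def Bform (n : ℕ) (p q : (Fin n → ℂ) × (Fin n → ℂ)) : ℂ :=
  ∑ t, (p.1 t * q.2 t + q.1 t * p.2 t)

/-- The linear map `σ_t` on `ℂⁿ ⊕ ℂⁿ` interchanging the `t`-th coordinates of the two
factors and fixing all other coordinates. -/
def sigmaSwap (n : ℕ) (t : Fin n) :
    ((Fin n → ℂ) × (Fin n → ℂ)) →ₗ[ℂ] ((Fin n → ℂ) × (Fin n → ℂ)) where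
  toFun p := (fun i => if i = t then p.2 i else p.1 i, fun i => if i = t then p.1 i else p.2 i)
  map_add' p q := by
    refine Prod.ext ?_ ?_ <;> funext i <;> by_cases h : i = t <;> simp [h]
  map_smul' c p := by
    refine Prod.ext ?_ ?_ <;> funext i <;> by_cases h : i = t <;> simp [h]

/-- The Grassmann (exterior) algebra `Λ(ℂⁿ)` on `n` generators. -/
abbrev GA (n : ℕ) := ExteriorAlgebra ℂ (Fin n → ℂ)

/-- `x_t` : left exterior multiplication by the `t`-th standard basis vector `e_t`. -/
noncomputable def Xop (n : ℕ) (t : Fin n) : GA n →ₗ[ℂ] GA n :=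
  LinearMap.mulLeft ℂ (ExteriorAlgebra.ι ℂ (Pi.single t 1))

/-- `∂_t` : left interior multiplication (contraction) with the `t`-th dual basis vector. -/
noncomputable def Dop (n : ℕ) (t : Fin n) : GA n →ₗ[ℂ] GA n :=
  CliffordAlgebra.contractLeft (LinearMap.proj t)

/-- The operator `d_{(β,γ)} = Σ_t (β_t ∂_t + γ_t x_t)` on `Λ(ℂⁿ)`. -/
noncomputable def dOp (n : ℕ) (p : (Fin n → ℂ) × (Fin n → ℂ)) : GA n →ₗ[ℂ] GA n :=
  ∑ t, (p.1 t • Dop n t + p.2 t • Xop n t)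


lemma DX (n : ℕ) (s u : Fin n) :
    Dop n s * Xop n u + Xop n u * Dop n s
      = (Pi.single u (1:ℂ) : Fin n → ℂ) s • (1 : Module.End ℂ (GA n)) := by
  refine LinearMap.ext fun w => ?_
  simp [Dop, Xop, ExteriorAlgebra.ι, CliffordAlgebra.contractLeft_ι_mul, Module.End.mul_apply]

lemma XX (n : ℕ) (s u : Fin n) :
    Xop n s * Xop n u + Xop n u * Xop n s = 0 := by
  refine LinearMap.ext fun w => ?_
  have h : ExteriorAlgebra.ι ℂ (Pi.single s (1:ℂ) : Fin n → ℂ)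
        * ExteriorAlgebra.ι ℂ (Pi.single u (1:ℂ) : Fin n → ℂ)
      + ExteriorAlgebra.ι ℂ (Pi.single u (1:ℂ) : Fin n → ℂ)
        * ExteriorAlgebra.ι ℂ (Pi.single s (1:ℂ) : Fin n → ℂ) = 0 := by
    simpa using CliffordAlgebra.ι_mul_ι_add_swap (Q := (0 : QuadraticForm ℂ (Fin n → ℂ)))
      (Pi.single s 1) (Pi.single u 1)
  simp only [LinearMap.add_apply, Module.End.mul_apply, Xop, LinearMap.mulLeft_apply,
    LinearMap.zero_apply, ← mul_assoc, ← add_mul]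
  rw [h, zero_mul]

lemma DD (n : ℕ) (s u : Fin n) :
    Dop n s * Dop n u + Dop n u * Dop n s = 0 := by
  refine LinearMap.ext fun w => ?_
  simp only [LinearMap.add_apply, Module.End.mul_apply, Dop, LinearMap.zero_apply]
  rw [CliffordAlgebra.contractLeft_comm]
  simp

lemma Dsq (n : ℕ) (s : Fin n) : Dop n s * Dop n s = 0 := by
  have : (2:ℂ) • (Dop n s * Dop n s) = 0 := by rw [two_smul]; exact DD n s s
  simpa using this

lemma Xsq (n : ℕ) (s : Fin n) : Xop n s * Xop n s = 0 := by
  have : (2:ℂ) • (Xop n s * Xop n s) = 0 := by rw [two_smul]; exact XX n s s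
  simpa using this

lemma Asq (n : ℕ) (t : Fin n) :
    (Dop n t - Xop n t) * (Dop n t - Xop n t) = -1 := by
  have h := DX n t t
  rw [Pi.single_eq_same, one_smul] at h
  rw [mul_sub, sub_mul, sub_mul, Dsq, Xsq]
  linear_combination (norm := abel) -h

lemma anticomm (n : ℕ) (t : Fin n) (p : (Fin n → ℂ) × (Fin n → ℂ)) :
    dOp n (sigmaSwap n t p) * (Dop n t - Xop n t)
      + (Dop n t - Xop n t) * dOp n p = 0 := by
  rw [dOp, dOp, Finset.sum_mul, Finset.mul_sum, ← Finset.sum_add_distrib]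
  refine Finset.sum_eq_zero fun s _ => ?_
  by_cases h : s = t
  · have h1 : (sigmaSwap n t p).1 s = p.2 s := by simp [sigmaSwap, h]
    have h2 : (sigmaSwap n t p).2 s = p.1 s := by simp [sigmaSwap, h]
    rw [h1, h2, h]
    simp only [mul_sub, sub_mul, add_mul, mul_add, smul_mul_assoc, mul_smul_comm,
      Dsq, Xsq, smul_zero]
    module
  · have h1 : (sigmaSwap n t p).1 s = p.1 s := by simp [sigmaSwap, h]
    have h2 : (sigmaSwap n t p).2 s = p.2 s := by simp [sigmaSwap, h]
    have hDD : Dop n s * Dop n t = -(Dop n t * Dop n s) :=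
      eq_neg_of_add_eq_zero_left (DD n s t)
    have hXX : Xop n s * Xop n t = -(Xop n t * Xop n s) :=
      eq_neg_of_add_eq_zero_left (XX n s t)
    have hDsXt : Dop n s * Xop n t = -(Xop n t * Dop n s) := by
      refine eq_neg_of_add_eq_zero_left ?_
      rw [DX n s t, Pi.single_eq_of_ne h, zero_smul]
    have hDtXs : Dop n t * Xop n s = -(Xop n s * Dop n t) := by
      refine eq_neg_of_add_eq_zero_left ?_
      rw [DX n t s, Pi.single_eq_of_ne (Ne.symm h), zero_smul]
    rw [h1, h2]
    simp only [mul_sub, sub_mul, add_mul, mul_add, smul_mul_assoc, mul_smul_comm,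
      hDD, hXX, hDsXt, hDtXs, smul_neg]
    module

lemma sigma_invol (n : ℕ) (t : Fin n) (p : (Fin n → ℂ) × (Fin n → ℂ)) :
    sigmaSwap n t (sigmaSwap n t p) = p := by
  refine Prod.ext ?_ ?_ <;> funext i <;> by_cases h : i = t <;> simp [sigmaSwap, h]

/-- (i) `d_{σ_t(β,γ)} ∘ (∂_t − x_t) = −(∂_t − x_t) ∘ d_{(β,γ)}`;
(ii) `(∂_t − x_t)² = −id`; (iii) consequently `∂_t − x_t` maps the joint kernel of the
operators of a set `V` bijectively onto the joint kernel of the operators of `σ_t(V)`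
(and this bijection is ℂ-linear, being given by the linear map `∂_t − x_t`). -/
theorem interchange_conjugation
    (n : ℕ) (t : Fin n) :
    (∀ p : (Fin n → ℂ) × (Fin n → ℂ),
      dOp n (sigmaSwap n t p) ∘ₗ (Dop n t - Xop n t) = -((Dop n t - Xop n t) ∘ₗ dOp n p)) ∧
    (Dop n t - Xop n t) ∘ₗ (Dop n t - Xop n t) = -LinearMap.id ∧
    ∀ V : Set ((Fin n → ℂ) × (Fin n → ℂ)),
      Set.BijOn (fun w => (Dop n t - Xop n t) w)
        {w : GA n | ∀ p ∈ V, dOp n p w = 0}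
        {w : GA n | ∀ q ∈ (fun p => sigmaSwap n t p) '' V, dOp n q w = 0} := by
  have hA2 : (Dop n t - Xop n t) ∘ₗ (Dop n t - Xop n t) = -LinearMap.id := by
    have h := Asq n t
    rwa [Module.End.mul_eq_comp] at h
  have hi : ∀ p : (Fin n → ℂ) × (Fin n → ℂ),
      dOp n (sigmaSwap n t p) ∘ₗ (Dop n t - Xop n t)
        = -((Dop n t - Xop n t) ∘ₗ dOp n p) := by
    intro p
    have h := eq_neg_of_add_eq_zero_left (anticomm n t p)
    simpa [Module.End.mul_eq_comp] using h
  refine ⟨hi, hA2, ?_⟩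
  intro V
  have hAA : ∀ w : GA n, (Dop n t - Xop n t) ((Dop n t - Xop n t) w) = -w := by
    intro w
    have h := LinearMap.ext_iff.mp hA2 w
    simpa using h
  have hconj : ∀ p w, dOp n (sigmaSwap n t p) ((Dop n t - Xop n t) w)
      = -((Dop n t - Xop n t) (dOp n p w)) := by
    intro p w
    have h := LinearMap.ext_iff.mp (hi p) w
    simpa using h
  refine ⟨?_, ?_, ?_⟩
  · intro w hw q hq
    obtain ⟨p, hp, rfl⟩ := hq
    rw [hconj p w, hw p hp, map_zero, neg_zero]
  · intro w _ w' _ h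
    have h2 : -w = -w' := by rw [← hAA w, ← hAA w']; exact congrArg _ h
    simpa using h2
  · intro w' hw'
    refine ⟨-((Dop n t - Xop n t) w'), ?_, ?_⟩
    · intro p hp
      have h0 : dOp n (sigmaSwap n t p) w' = 0 := hw' _ ⟨p, hp, rfl⟩
      have h := hconj (sigmaSwap n t p) w'
      rw [sigma_invol] at h
      rw [map_neg, h, h0, map_zero, neg_zero, neg_zero]
    · simp only [map_neg, hAA, neg_neg]
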